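/- arXiv:2411.15337 — 6 statements merged into one kernel-verified Lean document; each statement's English description precedes it below -/
import Mathlib

section
/- (Pettis' Lemma) If A is a non-meagre subset with the Baire property of a topological group G, then A^{-1}A is a neighborhood of the identity. -/
/-!
Let `U` be open with `A =ᵇ U`; then `U` is not meagre, so by the Banach category theorem some
`x ∈ U` has only non-meagre neighbourhoods. For `g` in the neighbourhood `x⁻¹U` of `1`, the set
`{y | y * g ∈ U} ∩ U` is a neighbourhood of `x`, hence non-meagre, and it differs from
`{y | y * g ∈ A} ∩ A` by a meagre set. Any `y` in the latter gives `g = y⁻¹ (y * g) ∈ A⁻¹A`.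
-/

open Set Filter Topology Pointwise

section Meagre

variable {X : Type*} [TopologicalSpace X] {s t : Set X}

theorem isMeagre_symmDiff_iff_residualEq : IsMeagre (symmDiff s t) ↔ s =ᵇ t := by
  rw [IsMeagre, eventuallyEq_set]
  refine Iff.of_eq (congrArg (· ∈ residual X) ?_)
  ext x
  simp only [mem_compl_iff, mem_symmDiff, mem_ofPred_eq]
  tauto

theorem Filter.EventuallyEq.isMeagre_iff (h : s =ᵇ t) : IsMeagre s ↔ IsMeagre t :=
  eventually_congr h.compl.mem_iff

theorem IsMeagre.exists_seq_isNowhereDense (hs : IsMeagre s) :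
    ∃ f : ℕ → Set X, (∀ n, IsNowhereDense (f n)) ∧ s ⊆ ⋃ n, f n := by
  obtain ⟨S, hS, hSc, hsS⟩ := isMeagre_iff_countable_union_isNowhereDense.mp hs
  -- `∅` is added so that the family is nonempty and can be enumerated by `ℕ`.
  obtain ⟨f, hf⟩ := (hSc.insert ∅).exists_eq_range (insert_nonempty ∅ S)
  refine ⟨f, fun n => ?_, hsS.trans ?_⟩
  · rcases (hf ▸ mem_range_self n : f n ∈ insert ∅ S) with h | h
    · exact h ▸ isNowhereDense_empty
    · exact hS _ h
  · refine sUnion_subset fun t ht => ?_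
    obtain ⟨n, rfl⟩ : t ∈ range f := hf ▸ mem_insert_of_mem ∅ ht
    exact subset_iUnion f n

theorem IsNowhereDense.biUnion_inter_of_pairwiseDisjoint {𝒞 : Set (Set X)}
    (hdisj : 𝒞.PairwiseDisjoint id) (hopen : ∀ O ∈ 𝒞, IsOpen O) {F : Set X → Set X}
    (hF : ∀ O ∈ 𝒞, IsNowhereDense (F O)) :
    IsNowhereDense (⋃ O ∈ 𝒞, F O ∩ O) := by
  set T := ⋃ O ∈ 𝒞, F O ∩ O
  refine isNowhereDense_iff_forall_notMem_nhds.2 fun y hy hT => ?_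
  obtain ⟨O, hO, hyF, hyO⟩ := mem_iUnion₂.1 hy
  have hTO : T ∩ O ⊆ F O := by
    rintro z ⟨hzT, hzO⟩
    obtain ⟨O', hO', hzF, hzO'⟩ := mem_iUnion₂.1 hzT
    obtain rfl : O' = O := hdisj.elim hO' hO (not_disjoint_iff.2 ⟨z, hzO', hzO⟩)
    exact hzF
  have : closure (F O) ∈ 𝓝 y :=
    mem_of_superset (inter_mem hT ((hopen O hO).mem_nhds hyO))
      (((hopen O hO).closure_inter).trans (closure_mono hTO))
  exact isNowhereDense_iff_forall_notMem_nhds.1 (hF O hO) y hyF this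

theorem IsMeagre.biUnion_inter_of_pairwiseDisjoint {𝒞 : Set (Set X)}
    (hdisj : 𝒞.PairwiseDisjoint id) (hopen : ∀ O ∈ 𝒞, IsOpen O) {M : Set X → Set X}
    (hM : ∀ O ∈ 𝒞, IsMeagre (M O)) :
    IsMeagre (⋃ O ∈ 𝒞, M O ∩ O) := by
  choose! F hF hMF using fun O (hO : O ∈ 𝒞) => (hM O hO).exists_seq_isNowhereDense
  refine (isMeagre_iUnion fun n => (IsNowhereDense.biUnion_inter_of_pairwiseDisjoint hdisj hopen
    (F := fun O => F O n) fun O hO => hF O hO n).isMeagre).mono ?_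
  simp only [iUnion_subset_iff]
  intro O hO x ⟨hxM, hxO⟩
  obtain ⟨n, hn⟩ := mem_iUnion.1 (hMF O hO hxM)
  exact mem_iUnion.2 ⟨n, mem_biUnion hO ⟨hn, hxO⟩⟩

end Meagre

theorem exists_maximal_pairwiseDisjoint {α : Type*} (P : Set α → Prop) :
    ∃ 𝒞 : Set (Set α), (∀ O ∈ 𝒞, P O) ∧ 𝒞.PairwiseDisjoint id ∧
      ∀ O, P O → Disjoint O (⋃₀ 𝒞) → O = ∅ := by
  set S := {𝒟 : Set (Set α) | (∀ O ∈ 𝒟, P O) ∧ 𝒟.PairwiseDisjoint id}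
  have hchain : ∀ c ⊆ S, IsChain (· ⊆ ·) c → ∃ ub ∈ S, ∀ 𝒟 ∈ c, 𝒟 ⊆ ub := fun c hcS hc =>
    ⟨⋃₀ c, ⟨fun O ⟨𝒟, h𝒟, hO⟩ => (hcS h𝒟).1 O hO,
      (hc.pairwiseDisjoint_sUnion id).2 fun 𝒟 h𝒟 => (hcS h𝒟).2⟩, fun _ => subset_sUnion_of_mem⟩
  obtain ⟨𝒞, h𝒞⟩ := zorn_subset S hchain
  refine ⟨𝒞, h𝒞.prop.1, h𝒞.prop.2, fun O hO hdisj => ?_⟩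
  have hins : insert O 𝒞 ∈ S :=
    ⟨forall_mem_insert.2 ⟨hO, h𝒞.prop.1⟩, h𝒞.prop.2.insert fun Q hQ _ =>
      hdisj.mono_right (subset_sUnion_of_mem hQ)⟩
  have hO𝒞 : O ∈ 𝒞 := h𝒞.2 hins (subset_insert _ _) (mem_insert _ _)
  exact disjoint_self.1 (hdisj.mono_right (subset_sUnion_of_mem hO𝒞))

section Banach

variable {X : Type*} [TopologicalSpace X] {s : Set X}

/-- The Banach category theorem. With `D` the union of a maximal disjoint family of open sets
meeting `s` in a meagre set, `s ∩ D` is meagre, `s ⊆ closure D`, and `closure D =ᵇ D`. -/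
theorem isMeagre_of_forall_exists_nhds_isMeagre_inter
    (h : ∀ x ∈ s, ∃ O ∈ 𝓝 x, IsMeagre (O ∩ s)) : IsMeagre s := by
  obtain ⟨𝒞, h𝒞, hdisj, hmax⟩ :=
    exists_maximal_pairwiseDisjoint fun O : Set X => IsOpen O ∧ IsMeagre (O ∩ s)
  have hD : IsOpen (⋃₀ 𝒞) := isOpen_sUnion fun O hO => (h𝒞 O hO).1
  have hsD : IsMeagre (s ∩ ⋃₀ 𝒞) := by
    refine (IsMeagre.biUnion_inter_of_pairwiseDisjoint hdisj (fun O hO => (h𝒞 O hO).1)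
      fun O hO => (h𝒞 O hO).2).mono ?_
    rintro x ⟨hxs, O, hO, hxO⟩
    exact mem_biUnion hO ⟨⟨hxO, hxs⟩, hxO⟩
  have hs_closure : s ⊆ closure (⋃₀ 𝒞) := by
    intro x hxs
    by_contra hx
    obtain ⟨O, hO, hOs⟩ := h x hxs
    have hW : interior O \ closure (⋃₀ 𝒞) = ∅ :=
      hmax _ ⟨isOpen_interior.sdiff isClosed_closure,
        hOs.mono (inter_subset_inter_left _ (sdiff_subset.trans interior_subset))⟩
        (disjoint_sdiff_left.mono_right subset_closure)
    exact hW.subset ⟨mem_interior_iff_mem_nhds.2 hO, hx⟩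
  rw [IsMeagre]
  filter_upwards [(closure_residualEq hD.isLocallyClosed).mem_iff, hsD] with x hx hxsD hxs
  exact hxsD ⟨hxs, hx.1 (hs_closure hxs)⟩

theorem exists_mem_forall_nhds_not_isMeagre_inter (hs : ¬IsMeagre s) :
    ∃ x ∈ s, ∀ O ∈ 𝓝 x, ¬IsMeagre (O ∩ s) := by
  contrapose! hs
  exact isMeagre_of_forall_exists_nhds_isMeagre_inter hs

end Banach

/-- Pettis' Lemma: if `A` is a non-meagre subset with the Baire property of a topological
group `G`, then `A⁻¹A` is a neighborhood of the identity. -/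
theorem stmt3 {G : Type} [Group G] [TopologicalSpace G] [IsTopologicalGroup G]
    (A : Set G) (hA : ¬ IsMeagre A)
    (hBP : ∃ U : Set G, IsOpen U ∧ IsMeagre (symmDiff A U)) :
    A⁻¹ * A ∈ nhds (1 : G) := by
  obtain ⟨U, hU, hAU⟩ := hBP
  rw [isMeagre_symmDiff_iff_residualEq] at hAU
  obtain ⟨x, hxU, hx⟩ := exists_mem_forall_nhds_not_isMeagre_inter (hAU.isMeagre_iff.not.1 hA)
  have hnhds : (x * ·) ⁻¹' U ∈ 𝓝 (1 : G) :=
    (hU.preimage (continuous_const_mul x)).mem_nhds (by simpa using hxU)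
  filter_upwards [hnhds] with g hg
  have hUg : (· * g) ⁻¹' U ∈ 𝓝 x := (hU.preimage (continuous_mul_const g)).mem_nhds hg
  have hAUg : ((· * g) ⁻¹' A : Set G) =ᵇ (· * g) ⁻¹' U :=
    hAU.comp_tendsto (tendsto_residual_of_isOpenMap (continuous_mul_const g)
      (isOpenMap_mul_right g))
  have hAg := hAUg.inter hAU
  obtain ⟨y, hyg, hy⟩ := nonempty_of_not_isMeagre (hAg.isMeagre_iff.not.2 (hx _ hUg))
  exact ⟨y⁻¹, inv_mem_inv.2 hy, y * g, hyg, by group⟩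
end

section
/- Let G be a topological group and A \subset G. Suppose A has the following property: for every nested sequence of open sets V_1 \subset V_2 \subset \cdots exhausting G with V_n V_n \subset V_{n+1} for all n, there exists n with A \subset V_n. Then whenever G acts continuously by isometries on a metric space (X, d), every A-orbit is bounded (i.e. A is coarsely bounded in G). -/
/-!
Fix a point `x`. The sets `Vₙ = {g | d(gx, x) < 2ⁿ}` are open, increasing and exhaust `G`,
and since `d(abx, x) ≤ d(abx, ax) + d(ax, x) = d(bx, x) + d(ax, x)` they satisfy
`Vₙ Vₙ ⊆ Vₙ₊₁`. Hence `A ⊆ Vₙ` for some `n`, i.e. `A x` lies in the ball of radius `2ⁿ`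
about `x`.
-/

open Pointwise

section Displacement

variable (G : Type*) {X : Type*} [PseudoMetricSpace X]

def displacementBall [SMul G X] (x : X) (n : ℕ) : Set G :=
  {g | dist (g • x) x < 2 ^ n}

variable {G}

theorem dist_mul_smul_le [Monoid G] [MulAction G X] [IsIsometricSMul G X] (a b : G) (x : X) :
    dist ((a * b) • x) x ≤ dist (a • x) x + dist (b • x) x :=
  calc dist ((a * b) • x) x ≤ dist ((a * b) • x) (a • x) + dist (a • x) x := dist_triangle _ _ _
    _ = dist (b • x) x + dist (a • x) x := by rw [mul_smul, dist_smul]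
    _ = dist (a • x) x + dist (b • x) x := add_comm _ _

theorem isOpen_displacementBall [TopologicalSpace G] [SMul G X] [ContinuousSMul G X]
    (x : X) (n : ℕ) : IsOpen (displacementBall G x n) :=
  isOpen_lt (by fun_prop) continuous_const

theorem displacementBall_subset_succ [SMul G X] (x : X) (n : ℕ) :
    displacementBall G x n ⊆ displacementBall G x (n + 1) :=
  fun _ hg => hg.trans (pow_lt_pow_right₀ (one_lt_two : (1 : ℝ) < 2) n.lt_succ_self)

theorem iUnion_displacementBall [SMul G X] (x : X) :
    ⋃ n, displacementBall G x n = Set.univ :=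
  Set.iUnion_eq_univ_iff.2 fun g =>
    let ⟨n, hn⟩ := pow_unbounded_of_one_lt (dist (g • x) x) one_lt_two
    ⟨n, hn⟩

theorem displacementBall_mul_subset_succ [Monoid G] [MulAction G X] [IsIsometricSMul G X]
    (x : X) (n : ℕ) :
    displacementBall G x n * displacementBall G x n ⊆ displacementBall G x (n + 1) := by
  rintro _ ⟨a, ha, b, hb, rfl⟩
  calc dist ((a * b) • x) x ≤ dist (a • x) x + dist (b • x) x := dist_mul_smul_le a b x
    _ < 2 ^ n + 2 ^ n := add_lt_add ha hb
    _ = 2 ^ (n + 1) := by ring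

end Displacement

/-- If `A` is contained in some member of every nested exhausting open sequence `(V_n)`
with `V_n V_n ⊆ V_{n+1}`, then every `A`-orbit of every continuous isometric action of
`G` on a metric space is bounded (i.e. `A` is coarsely bounded in `G`). -/
theorem stmt4 {G : Type} [Group G] [TopologicalSpace G] (A : Set G)
    (hA : ∀ V : ℕ → Set G, (∀ n, IsOpen (V n)) → (∀ n, V n ⊆ V (n + 1)) →
      (⋃ n, V n) = Set.univ → (∀ n, V n * V n ⊆ V (n + 1)) → ∃ n, A ⊆ V n) :
    ∀ (X : Type) [MetricSpace X] [MulAction G X],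
      Continuous (fun p : G × X => p.1 • p.2) →
      (∀ g : G, Isometry (fun x : X => g • x)) →
      ∀ x : X, Bornology.IsBounded ((fun g => g • x) '' A) := by
  intro X _ _ hcont hiso x
  have : ContinuousSMul G X := ⟨hcont⟩
  have : IsIsometricSMul G X := ⟨hiso⟩
  obtain ⟨n, hn⟩ := hA (displacementBall G x) (isOpen_displacementBall x)
    (displacementBall_subset_succ x) (iUnion_displacementBall x)
    (displacementBall_mul_subset_succ x)
  exact Metric.isBounded_ball.subset (Set.image_subset_iff.2 hn)
end

section
/- Let G be a topological group such that for every identity neighborhood U there is a countable set C with G generated by U \cup C. If A \subset G satisfies the property that for every nested sequence of open sets V_1 \subset V_2 \subset \cdots exhausting G with V_n V_n \subset V_{n+1} there is n with A \subset V_n, then for every identity neighborhood U there exist a finite set F \subset G and N \in \mathbb{N} with A \subset (FU)^N. -/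
/-!
Shrink `U` to a symmetric open identity neighbourhood `W`, enumerate a countable `C` with
`⟨W ∪ C⟩ = G` together with its inverses as `f 0, f 1, …`, and put
`F n = {1, f 0, …, f n}`. The sets `V n = (F n * W) ^ 2 ^ n` are open, increasing and satisfy
`V n * V n ⊆ V (n + 1)`, so their union is a submonoid; it contains `W ∪ C ∪ (W ∪ C)⁻¹`, hence is
all of `G`. The hypothesis on `A` gives `A ⊆ V n ⊆ (F n * U) ^ 2 ^ n`.
-/

open Pointwise Set

section Monoid

variable {M : Type*} [Monoid M]

theorem iUnion_eq_univ_of_closure_eq_top {S : Set M} (hS : Submonoid.closure S = ⊤)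
    {V : ℕ → Set M} (hV : Monotone V) (hmul : ∀ n, V n * V n ⊆ V (n + 1)) (h1 : 1 ∈ V 0)
    (hSV : S ⊆ ⋃ n, V n) : ⋃ n, V n = univ := by
  let N : Submonoid M :=
    { carrier := ⋃ n, V n
      one_mem' := mem_iUnion.2 ⟨0, h1⟩
      mul_mem' := by
        rintro x y ⟨_, ⟨m, rfl⟩, hx⟩ ⟨_, ⟨n, rfl⟩, hy⟩
        exact mem_iUnion_of_mem (max m n + 1) <|
          hmul _ (mul_mem_mul (hV (le_max_left m n) hx) (hV (le_max_right m n) hy)) }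
  have hN : (⊤ : Submonoid M) ≤ N := hS ▸ Submonoid.closure_le.2 hSV
  exact eq_univ_of_forall fun x => hN trivial

variable {T : ℕ → Set M}

theorem monotone_pow_two_pow (hT : Monotone T) (h1 : ∀ n, 1 ∈ T n) :
    Monotone fun n => T n ^ 2 ^ n :=
  fun _ n hmn => pow_subset_pow (hT hmn) (h1 n) (Nat.pow_le_pow_right two_pos hmn)

theorem pow_two_pow_mul_self_subset (hT : Monotone T) (n : ℕ) :
    T n ^ 2 ^ n * T n ^ 2 ^ n ⊆ T (n + 1) ^ 2 ^ (n + 1) := by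
  rw [← pow_add, ← two_mul, ← pow_succ']
  exact pow_subset_pow_left (hT n.le_succ)

theorem iUnion_pow_two_pow_eq_univ {S : Set M} (hS : Submonoid.closure S = ⊤)
    (hT : Monotone T) (h1 : ∀ n, 1 ∈ T n) (hST : S ⊆ ⋃ n, T n) :
    ⋃ n, T n ^ 2 ^ n = univ :=
  iUnion_eq_univ_of_closure_eq_top hS (monotone_pow_two_pow hT h1)
    (pow_two_pow_mul_self_subset hT) (by simpa only [pow_zero, pow_one] using h1 0)
    (hST.trans (iUnion_mono fun n => subset_pow (h1 n) (pow_ne_zero n two_ne_zero)))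

theorem subset_iUnion_insert_one_image_Iic_mul (f : ℕ → M) {W : Set M} (hW : 1 ∈ W) :
    W ∪ range f ⊆ ⋃ n, insert 1 (f '' Iic n) * W := by
  rintro x (hx | ⟨k, rfl⟩)
  · exact mem_iUnion_of_mem 0 (subset_mul_right W (mem_insert 1 _) hx)
  · exact mem_iUnion_of_mem k
      (subset_mul_left _ hW (mem_insert_of_mem 1 ⟨k, mem_Iic.2 le_rfl, rfl⟩))

end Monoid

section TopologicalGroup

variable {G : Type*} [Group G] [TopologicalSpace G]

theorem IsOpen.set_pow [ContinuousConstSMul G G] {s : Set G} (hs : IsOpen s) {n : ℕ}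
    (hn : n ≠ 0) : IsOpen (s ^ n) := by
  obtain ⟨k, rfl⟩ := Nat.exists_eq_succ_of_ne_zero hn
  rw [pow_succ]
  exact hs.mul_left

theorem exists_isOpen_one_mem_inv_eq_subset [ContinuousInv G] {U : Set G} (hU : U ∈ nhds 1) :
    ∃ W : Set G, IsOpen W ∧ 1 ∈ W ∧ W⁻¹ = W ∧ W ⊆ U := by
  have h1 : (1 : G) ∈ interior U := mem_interior_iff_mem_nhds.2 hU
  refine ⟨interior U ∩ (interior U)⁻¹, isOpen_interior.inter isOpen_interior.inv,
    ⟨h1, by simpa using h1⟩, ?_, fun x hx => interior_subset hx.1⟩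
  rw [inter_inv, inv_inv, inter_comm]

end TopologicalGroup

/-- If every identity neighborhood together with some countable set generates `G`, and `A`
is contained in some member of every nested exhausting open sequence `(V_n)` with
`V_n V_n ⊆ V_{n+1}`, then `A` satisfies Rosendal's criterion: for every identity
neighborhood `U` there are a finite `F` and `N` with `A ⊆ (FU)^N`. -/
theorem stmt5 {G : Type} [Group G] [TopologicalSpace G] [IsTopologicalGroup G]
    (hgen : ∀ U ∈ nhds (1 : G), ∃ C : Set G, C.Countable ∧ Subgroup.closure (U ∪ C) = ⊤)
    (A : Set G)
    (hA : ∀ V : ℕ → Set G, (∀ n, IsOpen (V n)) → (∀ n, V n ⊆ V (n + 1)) →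
      (⋃ n, V n) = Set.univ → (∀ n, V n * V n ⊆ V (n + 1)) → ∃ n, A ⊆ V n) :
    ∀ U ∈ nhds (1 : G), ∃ (F : Set G) (N : ℕ), F.Finite ∧
      A ⊆ ⋃ (ℓ : ℕ) (_ : ℓ ≤ N), (F * U) ^ ℓ := by
  intro U hU
  obtain ⟨W, hWo, hW1, hWinv, hWU⟩ := exists_isOpen_one_mem_inv_eq_subset hU
  obtain ⟨C, hC, hWC⟩ := hgen W (hWo.mem_nhds hW1)
  obtain ⟨f, hf⟩ := countable_iff_exists_subset_range.1 (hC.union (hC.preimage inv_injective))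
  set F : ℕ → Set G := fun n => insert 1 (f '' Iic n)
  set T : ℕ → Set G := fun n => F n * W
  have hT : Monotone T := fun _ _ hmn =>
    mul_subset_mul_right (insert_subset_insert (image_mono (Iic_subset_Iic.2 hmn)))
  have hT1 : ∀ n, (1 : G) ∈ T n := fun n => ⟨1, mem_insert _ _, 1, hW1, one_mul 1⟩
  have hclosure : Submonoid.closure (W ∪ C ∪ (W ∪ C)⁻¹) = ⊤ := by
    rw [← Subgroup.closure_toSubmonoid, hWC, Subgroup.top_toSubmonoid]
  have hcover : W ∪ C ∪ (W ∪ C)⁻¹ ⊆ ⋃ n, T n := by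
    refine Subset.trans ?_ (subset_iUnion_insert_one_image_Iic_mul f hW1)
    rw [union_inv, hWinv]
    rintro x ((hx | hx) | hx | hx)
    exacts [Or.inl hx, Or.inr (hf (Or.inl hx)), Or.inl hx, Or.inr (hf (Or.inr hx))]
  obtain ⟨n, hAn⟩ := hA (fun n => T n ^ 2 ^ n)
    (fun n => hWo.mul_left.set_pow (pow_ne_zero n two_ne_zero))
    (fun n => monotone_pow_two_pow hT hT1 n.le_succ)
    (iUnion_pow_two_pow_eq_univ hclosure hT hT1 hcover)
    (pow_two_pow_mul_self_subset hT)
  exact ⟨F n, 2 ^ n, ((finite_Iic n).image f).insert 1, hAn.trans <|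
    subset_iUnion₂_of_subset (2 ^ n) le_rfl (pow_subset_pow_left (mul_subset_mul_left hWU))⟩
end

section
/- Let G be a topological group and A \subset G. Suppose that for every identity neighborhood U there exist a finite set F and N with A \subset (FU)^N. Then for every nested sequence of open sets V_1 \subset V_2 \subset \cdots exhausting G with V_n V_n \subset V_{n+1} for all n, there exists m with A \subset V_m. -/
open Pointwise

/-! Choose `n₀` with `1 ∈ V n₀` and apply the hypothesis to the identity neighbourhood
`U = V n₀`. The finite set `F` is compact, so it lies in a single member of the directed open
cover `(V n)`; hence `F U ⊆ V (j + 1)` for some `j`. Since `1 ∈ V (j + 1)`, the squaring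
condition gives `V (j + 1) ^ ℓ ⊆ V (j + 1 + ℓ)`, so `A ⊆ (F U) ^ {≤ N} ⊆ V (j + 1 + N)`. -/

open Set

section Monoid

variable {M : Type*} [Monoid M] {V : ℕ → Set M}

theorem pow_subset_add_of_mul_self_subset (hV : Monotone V)
    (hsq : ∀ n, V n * V n ⊆ V (n + 1)) {n : ℕ} (h1 : (1 : M) ∈ V n) :
    ∀ ℓ : ℕ, V n ^ ℓ ⊆ V (n + ℓ)
  | 0 => by simpa using h1
  | ℓ + 1 =>
    calc V n ^ (ℓ + 1) = V n ^ ℓ * V n := pow_succ _ _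
      _ ⊆ V (n + ℓ) * V (n + ℓ) :=
          mul_subset_mul (pow_subset_add_of_mul_self_subset hV hsq h1 ℓ) (hV (by omega))
      _ ⊆ V (n + (ℓ + 1)) := hsq _

theorem biUnion_pow_subset_add_of_mul_self_subset (hV : Monotone V)
    (hsq : ∀ n, V n * V n ⊆ V (n + 1)) {n : ℕ} (h1 : (1 : M) ∈ V n) (N : ℕ) :
    ⋃ (ℓ : ℕ) (_ : ℓ ≤ N), V n ^ ℓ ⊆ V (n + N) :=
  iUnion₂_subset fun ℓ hℓ =>
    (pow_subset_add_of_mul_self_subset hV hsq h1 ℓ).trans (hV (by omega))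

end Monoid

/-- If for every identity neighborhood `U` there are a finite `F` and `N` with
`A ⊆ (FU)^N`, then `A` is contained in some member of every nested exhausting open
sequence `(V_n)` with `V_n V_n ⊆ V_{n+1}`. -/
theorem stmt6 {G : Type} [Group G] [TopologicalSpace G] (A : Set G)
    (hA : ∀ U ∈ nhds (1 : G), ∃ (F : Set G) (N : ℕ), F.Finite ∧
      A ⊆ ⋃ (ℓ : ℕ) (_ : ℓ ≤ N), (F * U) ^ ℓ) :
    ∀ V : ℕ → Set G, (∀ n, IsOpen (V n)) → (∀ n, V n ⊆ V (n + 1)) →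
      (⋃ n, V n) = Set.univ → (∀ n, V n * V n ⊆ V (n + 1)) → ∃ m, A ⊆ V m := by
  intro V hopen hsucc hexh hsq
  have hV : Monotone V := monotone_nat_of_le_succ hsucc
  have hcover : ∀ s : Set G, IsCompact s → ∃ n, s ⊆ V n := fun s hs =>
    hs.elim_directed_cover V hopen (hexh ▸ subset_univ s) hV.directed_le
  obtain ⟨n₀, h1⟩ := hcover {1} isCompact_singleton
  obtain ⟨F, N, hF, hAF⟩ := hA (V n₀) ((hopen n₀).mem_nhds (singleton_subset_iff.1 h1))
  obtain ⟨k, hFk⟩ := hcover F hF.isCompact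
  set j := max k n₀
  have hFV : F * V n₀ ⊆ V (j + 1) :=
    (mul_subset_mul (hFk.trans (hV (le_max_left k n₀))) (hV (le_max_right k n₀))).trans (hsq j)
  have h1' : (1 : G) ∈ V (j + 1) := hV ((le_max_right k n₀).trans j.le_succ) (singleton_subset_iff.1 h1)
  refine ⟨j + 1 + N, hAF.trans ((iUnion₂_mono fun ℓ _ => ?_).trans
    (biUnion_pow_subset_add_of_mul_self_subset hV hsq h1' N))⟩
  exact pow_subset_pow_left hFV
end

section
/- Every Polish group that is generated by a coarsely bounded subset has a coarsely bounded open identity neighborhood (i.e. boundedly generated Polish groups are locally bounded). -/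
open Pointwise

/-- A subset `A` of a topological group `G` is coarsely bounded in `G` if every orbit of
`A` under every continuous isometric action of `G` on a metric space is bounded. -/
def CoarselyBounded (G : Type) [Group G] [TopologicalSpace G] (A : Set G) : Prop :=
  ∀ (X : Type) [MetricSpace X] [MulAction G X],
    Continuous (fun p : G × X => p.1 • p.2) →
    (∀ g : G, Isometry (fun x : X => g • x)) →
    ∀ x : X, Bornology.IsBounded ((fun g => g • x) '' A)

/-!
`G` is the countable union of the closed sets `closure ((S ∪ S⁻¹) ^ n)`, each of which is
coarsely bounded because coarse boundedness survives inverses, products and closures. By the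
Baire category theorem one of them has an interior point `v`, and the translate by `v⁻¹` of its
interior is a coarsely bounded open neighbourhood of `1`.
-/

open Set

theorem Subgroup.exists_mem_pow_union_inv_of_mem_closure {G : Type*} [Group G] {S : Set G}
    {g : G} (hg : g ∈ Subgroup.closure S) : ∃ n : ℕ, g ∈ (S ∪ S⁻¹) ^ n := by
  induction hg using Subgroup.closure_induction with
  | mem g hg => exact ⟨1, by simpa using Or.inl hg⟩
  | one => exact ⟨0, by simp⟩
  | mul g h _ _ hg hh =>
    obtain ⟨m, hm⟩ := hg
    obtain ⟨n, hn⟩ := hh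
    exact ⟨m + n, pow_add (S ∪ S⁻¹) m n ▸ mul_mem_mul hm hn⟩
  | inv g _ hg =>
    obtain ⟨n, hn⟩ := hg
    have hsymm : (S ∪ S⁻¹)⁻¹ = S ∪ S⁻¹ := by rw [union_inv, inv_inv, union_comm]
    refine ⟨n, ?_⟩
    rwa [← hsymm, inv_pow, inv_mem_inv]

theorem coarselyBounded_iff_exists_dist_smul_le {G : Type} [Group G] [TopologicalSpace G]
    {A : Set G} : CoarselyBounded G A ↔
    ∀ (X : Type) [MetricSpace X] [MulAction G X] [ContinuousSMul G X] [IsIsometricSMul G X]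
      (x : X), ∃ C : ℝ, ∀ a ∈ A, dist (a • x) x ≤ C := by
  constructor
  · intro hA X _ _ _ _ x
    obtain ⟨C, hC⟩ := (hA X continuous_smul (isometry_smul X) x).subset_closedBall x
    exact ⟨C, fun a ha => hC ⟨a, ha, rfl⟩⟩
  · intro h X _ _ hcont hiso x
    have : ContinuousSMul G X := ⟨hcont⟩
    have : IsIsometricSMul G X := ⟨hiso⟩
    obtain ⟨C, hC⟩ := h X x
    rw [Metric.isBounded_iff_subset_closedBall x]
    exact ⟨C, by rintro _ ⟨a, ha, rfl⟩; exact hC a ha⟩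

namespace CoarselyBounded

variable {G : Type} [Group G] [TopologicalSpace G] {A B : Set G}

theorem mono (hB : CoarselyBounded G B) (hAB : A ⊆ B) : CoarselyBounded G A :=
  fun X _ _ hcont hiso x => (hB X hcont hiso x).subset (image_mono hAB)

theorem singleton (g : G) : CoarselyBounded G {g} :=
  fun X _ _ _ _ x => by simp

theorem union (hA : CoarselyBounded G A) (hB : CoarselyBounded G B) :
    CoarselyBounded G (A ∪ B) :=
  fun X _ _ hcont hiso x => by
    rw [image_union]
    exact (hA X hcont hiso x).union (hB X hcont hiso x)

theorem inv (hA : CoarselyBounded G A) : CoarselyBounded G A⁻¹ := by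
  refine coarselyBounded_iff_exists_dist_smul_le.2 fun X _ _ _ _ x => ?_
  obtain ⟨C, hC⟩ := coarselyBounded_iff_exists_dist_smul_le.1 hA X x
  refine ⟨C, fun a ha => ?_⟩
  calc dist (a • x) x = dist (a⁻¹ • x) x := by
        rw [← dist_smul a⁻¹ (a • x) x, inv_smul_smul, dist_comm]
    _ ≤ C := hC a⁻¹ ha

theorem mul (hA : CoarselyBounded G A) (hB : CoarselyBounded G B) :
    CoarselyBounded G (A * B) := by
  refine coarselyBounded_iff_exists_dist_smul_le.2 fun X _ _ _ _ x => ?_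
  obtain ⟨C, hC⟩ := coarselyBounded_iff_exists_dist_smul_le.1 hA X x
  obtain ⟨D, hD⟩ := coarselyBounded_iff_exists_dist_smul_le.1 hB X x
  refine ⟨D + C, ?_⟩
  rintro _ ⟨a, ha, b, hb, rfl⟩
  calc dist ((a * b) • x) x ≤ dist (a • b • x) (a • x) + dist (a • x) x := by
        rw [mul_smul]; exact dist_triangle _ _ _
    _ = dist (b • x) x + dist (a • x) x := by rw [dist_smul]
    _ ≤ D + C := add_le_add (hD b hb) (hC a ha)

theorem pow (hA : CoarselyBounded G A) :
    ∀ n : ℕ, CoarselyBounded G (A ^ n)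
  | 0 => singleton 1
  | n + 1 => by rw [pow_succ]; exact (pow hA n).mul hA

theorem closure (hA : CoarselyBounded G A) : CoarselyBounded G (closure A) := by
  refine coarselyBounded_iff_exists_dist_smul_le.2 fun X _ _ _ _ x => ?_
  obtain ⟨C, hC⟩ := coarselyBounded_iff_exists_dist_smul_le.1 hA X x
  have hclosed : IsClosed {g : G | dist (g • x) x ≤ C} :=
    isClosed_le ((continuous_id.smul continuous_const).dist continuous_const) continuous_const
  exact ⟨C, fun a ha => closure_minimal hC hclosed ha⟩

theorem exists_isOpen_one_mem [ContinuousMul G] (hA : CoarselyBounded G A)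
    (hint : (interior A).Nonempty) :
    ∃ U : Set G, IsOpen U ∧ (1 : G) ∈ U ∧ CoarselyBounded G U := by
  obtain ⟨v, hv⟩ := hint
  refine ⟨v⁻¹ • interior A, isOpen_interior.smul v⁻¹, ⟨v, hv, inv_mul_cancel v⟩, ?_⟩
  refine ((singleton v⁻¹).mul hA).mono ?_
  rw [singleton_mul]
  exact smul_set_mono interior_subset

end CoarselyBounded

/-- Every Polish group generated by a coarsely bounded set has a coarsely bounded open
identity neighborhood (boundedly generated implies locally bounded). -/
theorem stmt7 {G : Type} [Group G] [TopologicalSpace G] [IsTopologicalGroup G]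
    [PolishSpace G] (S : Set G) (hS : CoarselyBounded G S)
    (hgen : Subgroup.closure S = ⊤) :
    ∃ U : Set G, IsOpen U ∧ (1 : G) ∈ U ∧ CoarselyBounded G U := by
  have hcover : ⋃ n : ℕ, closure ((S ∪ S⁻¹) ^ n) = univ := by
    refine eq_univ_of_forall fun g => ?_
    obtain ⟨n, hn⟩ :=
      Subgroup.exists_mem_pow_union_inv_of_mem_closure (hgen ▸ Subgroup.mem_top g)
    exact mem_iUnion.2 ⟨n, subset_closure hn⟩
  obtain ⟨n, hn⟩ := nonempty_interior_of_iUnion_of_closed (fun _ => isClosed_closure) hcover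
  exact ((hS.union hS.inv).pow n).closure.exists_isOpen_one_mem hn
end

section
/- If X is a second countable topological space, then there exists a countable ordinal \rho such that the Cantor--Bendixson derivative satisfies X^{\rho} = X^{\rho+1}. -/
/-- The `o`-th Cantor--Bendixson derivative of the space `X`: `X^0 = X`,
`X^{α+1} = (X^α)'` (derived set), and `X^λ = ⋂_{α<λ} X^α` for limit `λ`. -/
noncomputable def cbDeriv (X : Type) [TopologicalSpace X] (o : Ordinal) : Set X :=
  Ordinal.limitRecOn o Set.univ (fun _ ih => derivedSet ih)
    (fun o _ ih => ⋂ (o' : Ordinal) (h : o' < o), ih o' h)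

/-!
A point of `X^ρ \ X^{ρ+1}` is isolated in `X^ρ`, so some basic open set `b_ρ` meets `X^ρ` in
exactly that point. If `ρ < σ` had `b_ρ = b_σ`, the point isolated by `b_σ` would lie in
`b_ρ ∩ X^σ ⊆ b_ρ ∩ X^ρ`, hence be the point isolated at stage `ρ`; but it also lies in
`X^σ ⊆ X^{ρ+1}`. So `ρ ↦ b_ρ` is injective on the stages where the derivative still shrinks,
and with a countable basis there are only countably many of them, while there are uncountably
many ordinals below `ω₁`.
-/

open Set TopologicalSpace Cardinal Ordinal

lemma TopologicalSpace.IsTopologicalBasis.exists_inter_subset_singleton_of_notMem_derivedSet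
    {X : Type*} [TopologicalSpace X] {B : Set (Set X)} (hB : IsTopologicalBasis B)
    {s : Set X} {x : X} (hx : x ∉ derivedSet s) : ∃ b ∈ B, x ∈ b ∧ b ∩ s ⊆ {x} := by
  rw [mem_derivedSet, accPt_iff_nhds] at hx
  push Not at hx
  obtain ⟨U, hU, hUs⟩ := hx
  obtain ⟨b, hb, hxb, hbU⟩ := hB.mem_nhds_iff.mp hU
  exact ⟨b, hb, hxb, fun y hy => hUs y ⟨hbU hy.1, hy.2⟩⟩

section CantorBendixson

variable {X : Type} [TopologicalSpace X]

lemma cbDeriv_zero : cbDeriv X 0 = Set.univ :=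
  limitRecOn_zero _ _ _

lemma cbDeriv_succ (o : Ordinal) : cbDeriv X (o + 1) = derivedSet (cbDeriv X o) :=
  limitRecOn_add_one _ _ _ _

lemma cbDeriv_limit {o : Ordinal} (ho : Order.IsSuccLimit o) :
    cbDeriv X o = ⋂ o' < o, cbDeriv X o' :=
  limitRecOn_limit _ _ _ _ ho

lemma cbDeriv_succ_subset (o : Ordinal) : cbDeriv X (o + 1) ⊆ cbDeriv X o := by
  induction o using limitRecOn with
  | zero => simp only [cbDeriv_zero, subset_univ]
  | add_one o ih => simpa only [cbDeriv_succ] using derivedSet_mono _ _ ih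
  | limit o ho ih =>
    rw [cbDeriv_succ, cbDeriv_limit ho]
    refine subset_iInter₂ fun α hα => ?_
    calc derivedSet (⋂ o' < o, cbDeriv X o')
        ⊆ derivedSet (cbDeriv X α) := derivedSet_mono _ _ (biInter_subset_of_mem hα)
      _ = cbDeriv X (α + 1) := (cbDeriv_succ α).symm
      _ ⊆ cbDeriv X α := ih α hα

lemma cbDeriv_antitone : Antitone (cbDeriv X) := by
  intro a b hab
  induction b using limitRecOn with
  | zero => rw [nonpos_iff_eq_zero.mp hab]
  | add_one b ih =>
    rcases hab.eq_or_lt with rfl | hlt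
    · exact subset_rfl
    · exact (cbDeriv_succ_subset b).trans (ih (Order.lt_add_one_iff.mp hlt))
  | limit b hb _ =>
    rcases hab.eq_or_lt with rfl | hlt
    · exact subset_rfl
    · exact (cbDeriv_limit hb).trans_subset (biInter_subset_of_mem hlt)

lemma countable_setOf_cbDeriv_succ_ne [SecondCountableTopology X] :
    {ρ : Ordinal | cbDeriv X (ρ + 1) ≠ cbDeriv X ρ}.Countable := by
  set S := {ρ : Ordinal | cbDeriv X (ρ + 1) ≠ cbDeriv X ρ}
  have isolating : ∀ ρ ∈ S, ∃ b ∈ countableBasis X, ∃ x ∈ b ∩ cbDeriv X ρ,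
      x ∉ cbDeriv X (ρ + 1) ∧ b ∩ cbDeriv X ρ ⊆ {x} := by
    intro ρ hρ
    obtain ⟨x, hxρ, hxρ'⟩ := exists_of_ssubset ((cbDeriv_succ_subset ρ).ssubset_of_ne hρ)
    rw [cbDeriv_succ] at hxρ'
    obtain ⟨b, hb, hxb, hbx⟩ := (isBasis_countableBasis X)
      |>.exists_inter_subset_singleton_of_notMem_derivedSet hxρ'
    exact ⟨b, hb, x, ⟨hxb, hxρ⟩, by rwa [cbDeriv_succ], hbx⟩
  choose! b hb hx using isolating
  have hne : ∀ ρ ∈ S, ∀ σ ∈ S, ρ < σ → b ρ ≠ b σ := by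
    intro ρ hρ σ hσ hρσ hb_eq
    obtain ⟨x, hxρ, hxρ', hbx⟩ := hx ρ hρ
    obtain ⟨y, hyσ, -, -⟩ := hx σ hσ
    have hyx : y = x := hbx ⟨hb_eq ▸ hyσ.1, cbDeriv_antitone hρσ.le hyσ.2⟩
    exact hxρ' (hyx ▸ cbDeriv_antitone (Order.add_one_le_iff.mpr hρσ) hyσ.2)
  refine MapsTo.countable_of_injOn hb (fun ρ hρ σ hσ h => ?_) (countable_countableBasis X)
  rcases lt_trichotomy ρ σ with hlt | heq | hgt
  · exact absurd h (hne ρ hρ σ hσ hlt)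
  · exact heq
  · exact absurd h.symm (hne σ hσ ρ hρ hgt)

end CantorBendixson

lemma Ordinal.not_countable_Iio_omega_one : ¬ (Iio (ω₁ : Ordinal)).Countable := by
  rw [← le_aleph0_iff_set_countable, Cardinal.mk_Iio_ordinal, card_omega, lift_le_aleph0]
  exact aleph0_lt_aleph_one.not_ge

/-- If `X` is second countable, then some countable ordinal `ρ` has `X^ρ = X^{ρ+1}`. -/
theorem stmt14 (X : Type) [TopologicalSpace X] [SecondCountableTopology X] :
    ∃ ρ : Ordinal, ρ.card ≤ Cardinal.aleph0 ∧ cbDeriv X ρ = cbDeriv X (ρ + 1) := by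
  obtain ⟨ρ, hρ, hρ_stable⟩ : ∃ ρ < ω₁, cbDeriv X (ρ + 1) = cbDeriv X ρ := by
    by_contra! h
    exact not_countable_Iio_omega_one (countable_setOf_cbDeriv_succ_ne.mono h)
  refine ⟨ρ, ?_, hρ_stable.symm⟩
  rwa [lt_omega_iff_card_lt, lt_aleph_one_iff] at hρ
end
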